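/- For any tree T of order n ≥ 2, the outer-connected domination number of T is strictly less than the outer-connected domination number of the middle graph M(T). -/

import Mathlib

open SimpleGraph

/-- `S` is a dominating set of `H`: every vertex is in `S` or adjacent to a vertex of `S`. -/
def IsDomSet {V : Type*} (H : SimpleGraph V) (S : Set V) : Prop :=
  ∀ v : V, ∃ u ∈ S, u = v ∨ H.Adj u v

/-- The connected domination number: minimum size of a dominating set inducing a
connected subgraph. -/
noncomputable def connDomNum {V : Type*} (H : SimpleGraph V) : ℕ :=
  sInf {k | ∃ S : Set V, IsDomSet H S ∧ (H.induce S).Connected ∧ S.ncard = k}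

/-- The outer-connected domination number: minimum size of a dominating set whose
complement induces a connected subgraph. -/
noncomputable def outConnDomNum {V : Type*} (H : SimpleGraph V) : ℕ :=
  sInf {k | ∃ S : Set V, IsDomSet H S ∧ (H.induce Sᶜ).Connected ∧ S.ncard = k}

/-- The middle graph `M(G)`: vertices are `V(G) ∪ E(G)`; a vertex is adjacent to its
incident edges, and two edges are adjacent iff they share a vertex. -/
def middleGraph {V : Type*} (G : SimpleGraph V) : SimpleGraph (V ⊕ G.edgeSet) where
  Adj x y :=
    match x, y with
    | Sum.inl _, Sum.inl _ => False
    | Sum.inl v, Sum.inr e => v ∈ (e : Sym2 V)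
    | Sum.inr e, Sum.inl v => v ∈ (e : Sym2 V)
    | Sum.inr e, Sum.inr f => e ≠ f ∧ ∃ v, v ∈ (e : Sym2 V) ∧ v ∈ (f : Sym2 V)
  symm.symm := by
    rintro (v | e) (w | f) h
    · exact h.elim
    · exact h
    · exact h
    · exact ⟨Ne.symm h.1, h.2.imp fun v hv => ⟨hv.2, hv.1⟩⟩
  loopless.irrefl := by
    rintro (v | e) h
    · exact h
    · exact h.1 rfl

/-- The edge cover number `ρ(G)`: minimum number of edges covering all vertices. -/
noncomputable def edgeCoverNum {V : Type*} (G : SimpleGraph V) : ℕ :=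
  sInf {k | ∃ C : Set (Sym2 V), C ⊆ G.edgeSet ∧ (∀ v : V, ∃ e ∈ C, v ∈ e) ∧ C.ncard = k}

/-- The wheel graph with hub `none` and a cycle on `ZMod n` (so `n + 1` vertices). -/
def wheelGraph (n : ℕ) : SimpleGraph (Option (ZMod n)) where
  Adj x y :=
    match x, y with
    | none, none => False
    | none, some _ => True
    | some _, none => True
    | some i, some j => i ≠ j ∧ (i - j = 1 ∨ j - i = 1)
  symm.symm := by
    rintro (_ | i) (_ | j) h
    · exact h.elim
    · trivial
    · trivial
    · exact ⟨h.1.symm, h.2.symm⟩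
  loopless.irrefl := by
    rintro (_ | i) h
    · exact h
    · exact h.1 rfl

/-- The friendship graph `F n`: `n` triangles sharing the common vertex `none`. -/
def friendshipGraph (n : ℕ) : SimpleGraph (Option (Fin n × Fin 2)) where
  Adj x y :=
    match x, y with
    | none, none => False
    | none, some _ => True
    | some _, none => True
    | some (i, a), some (j, b) => i = j ∧ a ≠ b
  symm.symm := by
    rintro (_ | ⟨i, a⟩) (_ | ⟨j, b⟩) h
    · exact h.elim
    · trivial
    · trivial
    · exact ⟨h.1.symm, h.2.symm⟩
  loopless.irrefl := by
    rintro (_ | ⟨i, a⟩) h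
    · exact h
    · exact h.2 rfl

/-- The corona `G ∘ K₁`: each vertex `Sum.inl v` of `G` gets a pendant vertex `Sum.inr v`. -/
def corona {V : Type*} (G : SimpleGraph V) : SimpleGraph (V ⊕ V) where
  Adj x y :=
    match x, y with
    | Sum.inl v, Sum.inl w => G.Adj v w
    | Sum.inl v, Sum.inr w => v = w
    | Sum.inr v, Sum.inl w => v = w
    | Sum.inr _, Sum.inr _ => False
  symm.symm := by
    rintro (v | v) (w | w) h
    · exact G.adj_symm h
    · exact h.symm
    · exact h.symm
    · exact h.elim
  loopless.irrefl := by
    rintro (v | v) h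
    · exact G.loopless.irrefl v h
    · exact h

/-- The 2-corona `G ∘ P₂`: each vertex `Sum.inl v` of `G` gets a pendant path
`Sum.inl v — Sum.inr (Sum.inl v) — Sum.inr (Sum.inr v)`. -/
def corona2 {V : Type*} (G : SimpleGraph V) : SimpleGraph (V ⊕ (V ⊕ V)) where
  Adj x y :=
    match x, y with
    | Sum.inl v, Sum.inl w => G.Adj v w
    | Sum.inl v, Sum.inr (Sum.inl w) => v = w
    | Sum.inr (Sum.inl v), Sum.inl w => v = w
    | Sum.inr (Sum.inl v), Sum.inr (Sum.inr w) => v = w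
    | Sum.inr (Sum.inr v), Sum.inr (Sum.inl w) => v = w
    | _, _ => False
  symm.symm := by
    rintro (v | v | v) (w | w | w) h
    · exact G.adj_symm h
    · exact h.symm
    · exact h.elim
    · exact h.symm
    · exact h.elim
    · exact h.symm
    · exact h.elim
    · exact h.symm
    · exact h.elim
  loopless.irrefl := by
    rintro (v | v | v) h
    · exact G.loopless.irrefl v h
    · exact h
    · exact h

/-- The join `G + K̄ p` of `G` with the empty graph on `p` vertices. -/
def joinEmpty {V : Type*} (G : SimpleGraph V) (p : ℕ) : SimpleGraph (V ⊕ Fin p) where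
  Adj x y :=
    match x, y with
    | Sum.inl v, Sum.inl w => G.Adj v w
    | Sum.inl _, Sum.inr _ => True
    | Sum.inr _, Sum.inl _ => True
    | Sum.inr _, Sum.inr _ => False
  symm.symm := by
    rintro (v | v) (w | w) h
    · exact G.adj_symm h
    · trivial
    · trivial
    · exact h.elim
  loopless.irrefl := by
    rintro (v | v) h
    · exact G.loopless.irrefl v h
    · exact h

/-! Deleting one vertex of `T` leaves an outer-connected dominating set, so `γ̃_c(T) ≤ n - 1`.
Conversely, let `S` be an outer-connected dominating set of `M(T)`. A vertex of `T` outside `S`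
is dominated by an edge in `S` containing it, and an edge `e = vw` in `S` cannot serve both `v`
and `w`: a path from `v` to `w` in `M(T) - S` projects to a walk from `v` to `w` in `T - e`, but
every edge of a tree is a bridge. So `S` contains at least as many edges as there are vertices
outside `S`, whence `|S| ≥ n`. -/

theorem Set.ncard_preimage_inl_add_ncard_preimage_inr {α β : Type*} [Finite α] [Finite β]
    (s : Set (α ⊕ β)) : (Sum.inl ⁻¹' s).ncard + (Sum.inr ⁻¹' s).ncard = s.ncard := by
  conv_rhs => rw [← Set.image_preimage_inl_union_image_preimage_inr s]
  rw [Set.ncard_union_eq Set.disjoint_image_inl_image_inr,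
    Set.ncard_image_of_injective _ Sum.inl_injective,
    Set.ncard_image_of_injective _ Sum.inr_injective]

theorem Set.ncard_le_ncard_of_forall_subsingleton {α β : Type*} {s : Set α} {t : Set β}
    (ht : t.Finite) (r : α → β → Prop) (hs : ∀ a ∈ s, ∃ b ∈ t, r a b)
    (hst : ∀ b ∈ t, {a | a ∈ s ∧ r a b}.Subsingleton) : s.ncard ≤ t.ncard := by
  obtain hsf | hsi := s.finite_or_infinite
  · rw [Set.ncard_eq_toFinset_card s hsf, Set.ncard_eq_toFinset_card t ht]
    exact Finset.card_le_card_of_forall_subsingleton r (by simpa using hs) (by simpa using hst)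
  · simp [hsi.ncard]

section

variable {V : Type*}

theorem isDomSet_compl_singleton {H : SimpleGraph V} {x y : V} (hxy : H.Adj x y) :
    IsDomSet H {x}ᶜ := by
  intro v
  by_cases hv : v = x
  · subst hv
    exact ⟨y, hxy.ne.symm, Or.inr hxy.symm⟩
  · exact ⟨v, hv, Or.inl rfl⟩

theorem connected_induce_compl_compl_singleton (H : SimpleGraph V) (x : V) :
    (H.induce ({x}ᶜ : Set V)ᶜ).Connected := by
  rw [compl_compl, induce_singleton_eq_top]
  exact connected_top

theorem le_outConnDomNum {H : SimpleGraph V} {x y : V} (hxy : H.Adj x y) {m : ℕ}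
    (h : ∀ S, IsDomSet H S → (H.induce Sᶜ).Connected → m ≤ S.ncard) :
    m ≤ outConnDomNum H :=
  le_csInf ⟨_, _, isDomSet_compl_singleton hxy, connected_induce_compl_compl_singleton H x, rfl⟩
    fun _ ⟨S, hdom, hconn, hS⟩ => hS ▸ h S hdom hconn

theorem outConnDomNum_le_card_sub_one [Finite V] {H : SimpleGraph V} {x y : V}
    (hxy : H.Adj x y) : outConnDomNum H ≤ Nat.card V - 1 := by
  refine Nat.sInf_le ⟨_, isDomSet_compl_singleton hxy,
    connected_induce_compl_compl_singleton H x, ?_⟩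
  rw [Set.ncard_compl, Set.ncard_singleton]

namespace middleGraph

variable {G : SimpleGraph V} {S : Set (V ⊕ G.edgeSet)}

theorem exists_edge_mem_of_isDomSet (hS : IsDomSet (middleGraph G) S) {v : V}
    (hv : Sum.inl v ∉ S) : ∃ e ∈ Sum.inr ⁻¹' S, v ∈ (e : Sym2 V) := by
  obtain ⟨x | e, hxS, hx | hx⟩ := hS (Sum.inl v)
  · exact absurd (Sum.inl_injective hx ▸ hxS) hv
  · exact hx.elim
  · exact (Sum.inr_ne_inl hx).elim
  · exact ⟨e, hxS, hx⟩

theorem reachable_of_mem_of_notMem {e : G.edgeSet} (he : Sum.inr e ∉ S) {u w : V}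
    (hu : u ∈ (e : Sym2 V)) (hw : w ∈ (e : Sym2 V)) :
    (G.deleteEdges (Subtype.val '' (Sum.inr ⁻¹' S))).Reachable u w := by
  obtain rfl | huw := eq_or_ne u w
  · rfl
  have hew : (e : Sym2 V) = s(u, w) := (Sym2.mem_and_mem_iff huw).mp ⟨hu, hw⟩
  refine Adj.reachable ((deleteEdges_adj ..).mpr ⟨?_, ?_⟩)
  · rw [← mem_edgeSet, ← hew]
    exact e.2
  · rintro ⟨f, hf, hfe⟩
    exact he (Subtype.ext (hfe.trans hew.symm) ▸ hf)

theorem reachable_deleteEdges_of_reachable {v w : V} {hv : Sum.inl v ∉ S} {hw : Sum.inl w ∉ S}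
    (h : ((middleGraph G).induce Sᶜ).Reachable ⟨Sum.inl v, hv⟩ ⟨Sum.inl w, hw⟩) :
    (G.deleteEdges (Subtype.val '' (Sum.inr ⁻¹' S))).Reachable v w := by
  let endpoint : V ⊕ G.edgeSet → V := Sum.elim id fun e => (e : Sym2 V).out.1
  have step : ∀ x y : ↥Sᶜ, ((middleGraph G).induce Sᶜ).Adj x y →
      (G.deleteEdges (Subtype.val '' (Sum.inr ⁻¹' S))).Reachable (endpoint x) (endpoint y) := by
    rintro ⟨x | e, hx⟩ ⟨y | f, hy⟩ hxy
    · exact hxy.elim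
    · exact reachable_of_mem_of_notMem hy hxy (Sym2.out_fst_mem _)
    · exact reachable_of_mem_of_notMem hx (Sym2.out_fst_mem _) hxy
    · obtain ⟨-, u, hue, huf⟩ := hxy
      exact (reachable_of_mem_of_notMem hx (Sym2.out_fst_mem _) hue).trans
        (reachable_of_mem_of_notMem hy huf (Sym2.out_fst_mem _))
  rw [reachable_iff_reflTransGen] at h ⊢
  exact h.lift' (endpoint ∘ Subtype.val) fun x y hxy =>
    (reachable_iff_reflTransGen _ _).mp (step x y hxy)

theorem subsingleton_of_isAcyclic (hG : G.IsAcyclic)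
    (hS : ((middleGraph G).induce Sᶜ).Preconnected)
    {e : G.edgeSet} (he : Sum.inr e ∈ S) :
    {v | Sum.inl v ∉ S ∧ v ∈ (e : Sym2 V)}.Subsingleton := by
  rintro v ⟨hv, hve⟩ w ⟨hw, hwe⟩
  by_contra hvw
  have hev : (e : Sym2 V) = s(v, w) := (Sym2.mem_and_mem_iff hvw).mp ⟨hve, hwe⟩
  have hbridge := isAcyclic_iff_forall_isBridge.mp hG e.2
  rw [hev, isBridge_iff] at hbridge
  refine hbridge ((reachable_deleteEdges_of_reachable (hS ⟨_, hv⟩ ⟨_, hw⟩)).mono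
    (deleteEdges_anti ?_))
  rw [Set.singleton_subset_iff, ← hev]
  exact ⟨e, he, rfl⟩

theorem card_le_ncard_of_isDomSet [Finite V] (hG : G.IsAcyclic)
    (hdom : IsDomSet (middleGraph G) S)
    (hconn : ((middleGraph G).induce Sᶜ).Connected) : Nat.card V ≤ S.ncard := by
  have hcompl : (Sum.inl ⁻¹' S)ᶜ.ncard ≤ (Sum.inr ⁻¹' S).ncard :=
    Set.ncard_le_ncard_of_forall_subsingleton (Set.toFinite _) (fun v e => v ∈ (e : Sym2 V))
      (fun _ hv => exists_edge_mem_of_isDomSet hdom hv)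
      (fun _ he => subsingleton_of_isAcyclic hG hconn.preconnected he)
  rw [← Set.ncard_add_ncard_compl (Sum.inl ⁻¹' S),
    ← Set.ncard_preimage_inl_add_ncard_preimage_inr S]
  omega

end middleGraph

end

theorem stmt3 {V : Type*} [Fintype V] (T : SimpleGraph V)
    (h2 : 2 ≤ Fintype.card V) (hT : T.IsTree) :
    outConnDomNum T < outConnDomNum (middleGraph T) := by
  have : Nontrivial V := Fintype.one_lt_card_iff_nontrivial.mp h2
  obtain ⟨v⟩ := hT.connected.nonempty
  obtain ⟨w, hvw⟩ := hT.connected.preconnected.exists_adj_of_nontrivial v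
  have hmiddle : (middleGraph T).Adj (Sum.inl v) (Sum.inr ⟨s(v, w), hvw⟩) :=
    Sym2.mem_mk_left v w
  calc outConnDomNum T ≤ Nat.card V - 1 := outConnDomNum_le_card_sub_one hvw
    _ < Nat.card V := by rw [Nat.card_eq_fintype_card]; omega
    _ ≤ outConnDomNum (middleGraph T) :=
      le_outConnDomNum hmiddle fun _ hdom hconn =>
        middleGraph.card_le_ncard_of_isDomSet hT.isAcyclic hdom hconn
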